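/- Let G be an isometric subgraph of Q_m = Q(X) and let Y ⊆ X be shattered by (the vertex set of) G. Then for any subset A ⊆ Y, the subgraph G(v_A) of G induced by the vertices B of G with B ∩ Y = A is a nonempty isometric subgraph of Q_m. -/

import Mathlib

open Finset

/-- The hypercube graph on subsets of `Fin m`. -/
def cubeGraph (m : ℕ) : SimpleGraph (Finset (Fin m)) where
  Adj A B := (symmDiff A B).card = 1
  symm := ⟨fun A B h => by show (symmDiff B A).card = 1; rwa [symmDiff_comm]⟩
  loopless := ⟨fun A h => by simp only [symmDiff_self, bot_eq_empty, card_empty] at h; exact absurd h (by norm_num)⟩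

/-- `V` is (the vertex set of) a partial cube isometrically embedded in `Q_m`:
the distance in the induced subgraph equals the Hamming distance. -/
def IsPC {m : ℕ} (V : Set (Finset (Fin m))) : Prop :=
  ∀ u v : V, ((cubeGraph m).induce V).dist u v = (symmDiff u.1 v.1).card

def Shatters {m : ℕ} (V : Set (Finset (Fin m))) (Y : Finset (Fin m)) : Prop :=
  ∀ Z ⊆ Y, ∃ B ∈ V, B ∩ Y = Z

def VCdimLE {m : ℕ} (V : Set (Finset (Fin m))) (d : ℕ) : Prop :=
  ∀ Y : Finset (Fin m), Shatters V Y → Y.card ≤ d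

inductive PCStep {m : ℕ} : Set (Finset (Fin m)) → Set (Finset (Fin m)) → Prop
  | contract (i : Fin m) (V : Set (Finset (Fin m))) :
      PCStep V ((fun B => B.erase i) '' V)
  | restrictPos (i : Fin m) (V : Set (Finset (Fin m))) :
      PCStep V {B ∈ V | i ∈ B}
  | restrictNeg (i : Fin m) (V : Set (Finset (Fin m))) :
      PCStep V {B ∈ V | i ∉ B}

/-- Partial-cube minor relation: a sequence of contractions and restrictions. -/
def PCMinor {m : ℕ} : Set (Finset (Fin m)) → Set (Finset (Fin m)) → Prop :=
  Relation.ReflTransGen PCStep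

/-- `W` is (the vertex set of) a `k`-dimensional subcube of `Q_m`. -/
def IsCubeFam {m : ℕ} (k : ℕ) (W : Set (Finset (Fin m))) : Prop :=
  ∃ (Y X : Finset (Fin m)), Disjoint Y X ∧ X.card = k ∧
    W = {B | ∃ Z ⊆ X, B = Y ∪ Z}

/-- `G` has the cube `Q_k` as a pc-minor. -/
def HasQMinor {m : ℕ} (V : Set (Finset (Fin m))) (k : ℕ) : Prop :=
  ∃ W, PCMinor V W ∧ IsCubeFam k W

def hdist {m : ℕ} (A B : Finset (Fin m)) : ℕ := (symmDiff A B).card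

def IsConvexIn {m : ℕ} (V S : Set (Finset (Fin m))) : Prop :=
  S ⊆ V ∧ ∀ u ∈ S, ∀ v ∈ S, ∀ x ∈ V, hdist u x + hdist x v = hdist u v → x ∈ S

def convexHullIn {m : ℕ} (V S : Set (Finset (Fin m))) : Set (Finset (Fin m)) :=
  ⋂₀ {T | S ⊆ T ∧ IsConvexIn V T}

def IsGatedIn {m : ℕ} (V S : Set (Finset (Fin m))) : Prop :=
  S ⊆ V ∧ ∀ x ∈ V, ∃ g ∈ S, ∀ y ∈ S, hdist x g + hdist g y = hdist x y

/-- The standardly embedded full subdivision `SK_n` in `Q_n`: singletons and pairs. -/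
def SKset (n : ℕ) : Set (Finset (Fin n)) := {B | B.card = 1 ∨ B.card = 2}

/-- A standardly embedded copy of `SK_n` in `Q_m` along the injection `ι`. -/
def skCopy {m : ℕ} (n : ℕ) (ι : Fin n → Fin m) : Set (Finset (Fin m)) :=
  (fun B => B.image ι) '' SKset n

/-!
The fiber `{B ∈ V | B ∩ Y = A}` is convex in `V`: a vertex on a Hamming geodesic between two
vertices of the fiber differs from them only in coordinates outside `Y`. A convex subset of a
partial cube is itself isometric, because the geodesics of `V` between its vertices never leave
it. Nonemptiness of the fiber is exactly what shattering provides.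
-/

namespace SimpleGraph.Walk

variable {V : Type*} {G : SimpleGraph V} {u v x : V}

theorem dist_add_dist_le_length [DecidableEq V] (p : G.Walk u v) (hx : x ∈ p.support) :
    G.dist u x + G.dist x v ≤ p.length := by
  have hsplit := congrArg length (p.take_spec hx)
  rw [length_append] at hsplit
  have := G.dist_le (p.takeUntil x hx)
  have := G.dist_le (p.dropUntil x hx)
  omega

theorem length_induce {s : Set V} (p : G.Walk u v) (hp : ∀ y ∈ p.support, y ∈ s) :
    (p.induce s hp).length = p.length := by
  induction p <;> simp [*]

end SimpleGraph.Walk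

open SimpleGraph

section Hamming

variable {m : ℕ}

theorem hdist_triangle (a b c : Finset (Fin m)) : hdist a c ≤ hdist a b + hdist b c :=
  (card_le_card (symmDiff_triangle a b c)).trans (card_union_le _ _)

theorem hdist_le_length {a b : Finset (Fin m)} (p : (cubeGraph m).Walk a b) :
    hdist a b ≤ p.length := by
  induction p with
  | nil => simp [hdist]
  | @cons a c b hadj p ih =>
    have hstep : hdist a c = 1 := hadj
    have := hdist_triangle a c b
    rw [Walk.length_cons]
    omega

theorem symmDiff_subset_symmDiff_of_hdist_add_eq {u v x : Finset (Fin m)}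
    (h : hdist u x + hdist x v = hdist u v) : symmDiff u x ⊆ symmDiff u v := by
  have hcard : (symmDiff u x ∪ symmDiff x v).card ≤ (symmDiff u v).card :=
    (card_union_le _ _).trans h.le
  rw [eq_of_subset_of_card_le (symmDiff_triangle u x v) hcard]
  exact subset_union_left

theorem inter_eq_inter_iff_disjoint_symmDiff {u x Y : Finset (Fin m)} :
    u ∩ Y = x ∩ Y ↔ Disjoint (symmDiff u x) Y := by
  change u ⊓ Y = x ⊓ Y ↔ _
  rw [← symmDiff_eq_bot, ← inf_symmDiff_distrib_right, disjoint_iff]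

end Hamming

section PartialCube

variable {m : ℕ}

theorem isPC_of_exists_walk {S : Set (Finset (Fin m))}
    (h : ∀ u v : S, ∃ p : ((cubeGraph m).induce S).Walk u v, p.length ≤ hdist u.1 v.1) :
    IsPC S := by
  intro u v
  obtain ⟨p, hp⟩ := h u v
  obtain ⟨q, hq⟩ := p.reachable.exists_walk_length_eq_dist
  have hlower := hdist_le_length (q.map (Embedding.induce S).toHom)
  rw [Walk.length_map, hq] at hlower
  exact le_antisymm ((dist_le p).trans hp) hlower

theorem IsConvexIn.isPC {V S : Set (Finset (Fin m))} (hV : IsPC V) (hS : IsConvexIn V S) :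
    IsPC S := by
  refine isPC_of_exists_walk fun u v => ?_
  let u' : V := ⟨u.1, hS.1 u.2⟩
  let v' : V := ⟨v.1, hS.1 v.2⟩
  have hreach : ((cubeGraph m).induce V).Reachable u' v' := by
    by_cases huv : u = v
    · subst huv; rfl
    · refine Reachable.of_dist_ne_zero ?_
      rw [hV u' v']
      exact card_ne_zero.2 (symmDiff_nonempty.2 fun h => huv (Subtype.ext h))
  obtain ⟨p, hp⟩ := hreach.exists_walk_length_eq_dist
  have hpS : ∀ y ∈ (p.map (Embedding.induce V).toHom).support, y ∈ S := by
    intro y hy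
    obtain ⟨x, hx, rfl⟩ := List.mem_map.1 (Walk.support_map _ p ▸ hy)
    have hle := p.dist_add_dist_le_length hx
    rw [hp, hV, hV, hV] at hle
    exact hS.2 u u.2 v v.2 x x.2 (le_antisymm hle (hdist_triangle _ _ _))
  have hlen := (p.map (Embedding.induce V).toHom).length_induce hpS
  rw [Walk.length_map, hp, hV] at hlen
  exact ⟨_, hlen.le⟩

theorem isConvexIn_fiber (V : Set (Finset (Fin m))) (Y A : Finset (Fin m)) :
    IsConvexIn V {B ∈ V | B ∩ Y = A} := by
  refine ⟨fun B hB => hB.1, ?_⟩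
  rintro u ⟨-, rfl⟩ v ⟨-, hv⟩ x hxV hx
  refine ⟨hxV, Eq.symm (inter_eq_inter_iff_disjoint_symmDiff.2 ?_)⟩
  exact (inter_eq_inter_iff_disjoint_symmDiff.1 hv.symm).mono_left
    (symmDiff_subset_symmDiff_of_hdist_add_eq hx)

end PartialCube

/-- If an isometric subgraph `V` of `Q_m` shatters `Y`, then for every `A ⊆ Y`
the fiber `G(v_A)` is a nonempty isometric subgraph. -/
theorem stmt2 (m : ℕ) (V : Set (Finset (Fin m))) (hV : IsPC V)
    (Y : Finset (Fin m)) (hY : Shatters V Y) (A : Finset (Fin m)) (hA : A ⊆ Y) :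
    ({B ∈ V | B ∩ Y = A} : Set (Finset (Fin m))).Nonempty ∧
      IsPC {B ∈ V | B ∩ Y = A} :=
  ⟨hY A hA, (isConvexIn_fiber V Y A).isPC hV⟩
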